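/- Let x ∈ Y be such that there exists M ∈ ℕ with x_i finite for 1 ≤ i < M and x_i = ∞ for i ≥ M, and let K ∈ ℕ satisfy K ≥ x_{M−1}. Define y ∈ Y by y_i = x_i for 0 ≤ i < M and y_i = K for i ≥ M. Then (x, y) is a scrambled pair with modulus 1/2 for F, i.e., liminf_{n→∞} D(Fⁿ(x), Fⁿ(y)) = 0 and limsup_{n→∞} D(Fⁿ(x), Fⁿ(y)) ≥ 1/2. -/

import Mathlib

/-!
After `n` steps the coordinates `i ≥ M` of `x` are still `∞` while those of `y` equal `K + n`,
so the tail contributes `bₙ = c / (K + n)` to `D`, with `c = ∑_{i ≥ M} 2⁻ⁱ`, and the circle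
coordinates have drifted apart by the partial sum `∑_{k<n} b_k`. Hence
`D(Fⁿx, Fⁿy) = ‖∑_{k<n} b_k mod 1‖ + bₙ`. Since `bₙ → 0` while `∑ b_k` diverges, the partial sums
sweep across every unit interval in steps that become arbitrarily small, so modulo `1` they come
arbitrarily close to `0` and to `1/2` infinitely often.
-/

open Filter

noncomputable section

instance : Fact ((0:ℝ) < 1) := ⟨one_pos⟩

/-- The unit circle `𝕊 = ℝ/ℤ` (with the metric `d₀(x,y) = min{|x−y|, 1−|x−y|}`). -/
abbrev Circle1 := AddCircle (1 : ℝ)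

/-- Points of the product space `Π_{i=0}^∞ X_i = 𝕊 × Π_{i≥1} (ℕ ∪ {∞})`:
the first component is the circle coordinate `x₀`, and the second component gives
the coordinates `x_i ∈ ℕ ∪ {∞}` for `i ≥ 1`. -/
abbrev Pt := Circle1 × (ℕ+ → ℕ∞)

/-- `1/x` for `x ∈ ℕ ∪ {∞}`, with the convention `1/∞ = 0`. -/
noncomputable def einv (x : ℕ∞) : ℝ := ((x.toNat : ℕ) : ℝ)⁻¹

/-- The metric `d_i(x,y) = |1/x − 1/y|` on `ℕ ∪ {∞}` (for `i ≥ 1`). -/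
noncomputable def dE (x y : ℕ∞) : ℝ := |einv x - einv y|

/-- The metric `D(x,y) = Σ_{i=0}^∞ d_i(x_i,y_i)/2^i` on the product space. -/
noncomputable def D (x y : Pt) : ℝ :=
  dist x.1 y.1 + ∑' i : ℕ+, dE (x.2 i) (y.2 i) / 2 ^ (i : ℕ)

/-- `Y`: the set of points whose sequence of coordinates `(x_i)_{i≥1}` is a nondecreasing
sequence in `ℕ ∪ {∞}` (with `ℕ = {1,2,…}`). -/
def Y : Set Pt := {x | (∀ i, 1 ≤ x.2 i) ∧ Monotone x.2}

/-- The skew-product map `F`: `f₀(x) = (x₀ + Σ_{i≥1} 2^{−i}·(1/x_i)) mod 1` and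
`f_i(x) = x_i + 1` for `i ≥ 1`, with `∞ + 1 = ∞`. -/
noncomputable def F (x : Pt) : Pt :=
  (x.1 + (((∑' i : ℕ+, (1 / 2 ^ (i : ℕ)) * einv (x.2 i)) : ℝ) : Circle1),
   fun i => x.2 i + 1)

/-- `(x, y)` is a scrambled pair of `F`:
`liminf_{n→∞} D(Fⁿ(x), Fⁿ(y)) = 0` and `limsup_{n→∞} D(Fⁿ(x), Fⁿ(y)) > 0`. -/
def ScrambledPair (x y : Pt) : Prop :=
  liminf (fun n : ℕ => D (F^[n] x) (F^[n] y)) atTop = 0 ∧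
  0 < limsup (fun n : ℕ => D (F^[n] x) (F^[n] y)) atTop

open Finset Topology

section PartialSumsModPeriod

variable {b : ℕ → ℝ}

theorem exists_sum_range_mem_Ico {ε T : ℝ} {N : ℕ} (hT : ∑ k ∈ range N, b k < T)
    (hstep : ∀ k ≥ N, b k < ε)
    (htop : Tendsto (fun n ↦ ∑ k ∈ range n, b k) atTop atTop) :
    ∃ n ≥ N, ∑ k ∈ range n, b k ∈ Set.Ico T (T + ε) := by
  classical
  have hex : ∃ n, N ≤ n ∧ T ≤ ∑ k ∈ range n, b k :=
    ((eventually_ge_atTop N).and (htop.eventually_ge_atTop T)).exists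
  obtain ⟨hNn, hTn⟩ := Nat.find_spec hex
  have hNlt : N < Nat.find hex := lt_of_le_of_ne hNn fun h ↦ by rw [← h] at hTn; linarith
  obtain ⟨m, hm⟩ := Nat.exists_eq_add_of_lt hNlt
  rw [hm] at hTn
  have hmT : ∑ k ∈ range (N + m), b k < T := by
    by_contra! h
    exact Nat.find_min hex (by omega) ⟨by omega, h⟩
  refine ⟨N + m + 1, by omega, hTn, ?_⟩
  rw [sum_range_succ]
  linarith [hstep (N + m) (by omega)]

variable {p : ℝ}

theorem AddCircle.frequently_dist_sum_range_lt (hp : 0 < p) (hb0 : ∀ n, 0 ≤ b n)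
    (hb : Tendsto b atTop (𝓝 0)) (hbs : ¬Summable b) (t : ℝ) {ε : ℝ} (hε : 0 < ε) :
    ∃ᶠ n in atTop, dist ((∑ k ∈ range n, b k : ℝ) : AddCircle p) t < ε := by
  have htop := (not_summable_iff_tendsto_nat_atTop_of_nonneg hb0).1 hbs
  obtain ⟨N₁, hN₁⟩ := eventually_atTop.1 (hb.eventually (gt_mem_nhds hε))
  refine frequently_atTop.2 fun N₀ ↦ ?_
  set N := max N₀ N₁
  obtain ⟨m, hm⟩ := exists_int_gt ((∑ k ∈ range N, b k - t) / p)
  rw [div_lt_iff₀ hp] at hm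
  obtain ⟨n, hn, hlo, hhi⟩ := exists_sum_range_mem_Ico (T := t + m * p) (by linarith)
    (fun k hk ↦ hN₁ k (le_of_max_le_right hk)) htop
  refine ⟨n, le_of_max_le_left hn, ?_⟩
  -- `t` and `t + m * p` are the same point of the circle
  calc dist ((∑ k ∈ range n, b k : ℝ) : AddCircle p) t
      = ‖((∑ k ∈ range n, b k - (t + m * p) : ℝ) : AddCircle p)‖ := by
        rw [dist_eq_norm, ← zsmul_eq_mul, AddCircle.coe_sub, AddCircle.coe_add,
          AddCircle.coe_zsmul, AddCircle.coe_period, smul_zero, add_zero]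
    _ ≤ |∑ k ∈ range n, b k - (t + m * p)| := QuotientAddGroup.norm_mk_le_norm
    _ < ε := by rw [abs_of_nonneg (by linarith)]; linarith

theorem AddCircle.isBoundedUnder_le_norm_add (hp : p ≠ 0) {θ : ℕ → AddCircle p}
    (hb : Tendsto b atTop (𝓝 0)) :
    IsBoundedUnder (· ≤ ·) atTop (fun n ↦ ‖θ n‖ + b n) :=
  isBoundedUnder_le_add (isBoundedUnder_of ⟨|p| / 2, fun _ ↦ AddCircle.norm_le_half_period p hp⟩)
    hb.isBoundedUnder_le

theorem AddCircle.liminf_norm_sum_range_add_eq_zero (hp : 0 < p) (hb0 : ∀ n, 0 ≤ b n)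
    (hb : Tendsto b atTop (𝓝 0)) (hbs : ¬Summable b) :
    liminf (fun n ↦ ‖((∑ k ∈ range n, b k : ℝ) : AddCircle p)‖ + b n) atTop = 0 := by
  have hnonneg : ∀ n, 0 ≤ ‖((∑ k ∈ range n, b k : ℝ) : AddCircle p)‖ + b n :=
    fun n ↦ add_nonneg (norm_nonneg _) (hb0 n)
  refine le_antisymm (le_of_forall_pos_le_add fun ε hε ↦ ?_)
    (le_liminf_of_le (AddCircle.isBoundedUnder_le_norm_add hp.ne' hb).isCoboundedUnder_ge
      (.of_forall hnonneg))
  refine liminf_le_of_frequently_le ?_ (isBoundedUnder_of ⟨0, hnonneg⟩)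
  refine ((AddCircle.frequently_dist_sum_range_lt hp hb0 hb hbs 0 (half_pos hε)).and_eventually
    (hb.eventually (gt_mem_nhds (half_pos hε)))).mono fun n ⟨hdist, hbn⟩ ↦ ?_
  rw [AddCircle.coe_zero, dist_zero_right] at hdist
  linarith

theorem AddCircle.half_period_le_limsup_norm_sum_range_add (hp : 0 < p) (hb0 : ∀ n, 0 ≤ b n)
    (hb : Tendsto b atTop (𝓝 0)) (hbs : ¬Summable b) :
    p / 2 ≤ limsup (fun n ↦ ‖((∑ k ∈ range n, b k : ℝ) : AddCircle p)‖ + b n) atTop := by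
  refine le_of_forall_pos_le_add fun ε hε ↦ ?_
  suffices p / 2 - ε ≤ limsup (fun n ↦ ‖((∑ k ∈ range n, b k : ℝ) : AddCircle p)‖ + b n) atTop by
    linarith
  refine le_limsup_of_frequently_le ?_ (AddCircle.isBoundedUnder_le_norm_add hp.ne' hb)
  refine (AddCircle.frequently_dist_sum_range_lt hp hb0 hb hbs (p / 2) hε).mono fun n hdist ↦ ?_
  have hhalf : ‖((p / 2 : ℝ) : AddCircle p)‖ = p / 2 := by
    rw [AddCircle.norm_half_period_eq, abs_of_pos hp]
  have := norm_sub_norm_le ((p / 2 : ℝ) : AddCircle p) ((∑ k ∈ range n, b k : ℝ) : AddCircle p)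
  rw [← dist_eq_norm, dist_comm] at this
  linarith [hb0 n]

end PartialSumsModPeriod

section Dynamics

theorem einv_nonneg (z : ℕ∞) : 0 ≤ einv z := by
  unfold einv; positivity

theorem einv_le_one (z : ℕ∞) : einv z ≤ 1 :=
  Nat.cast_inv_le_one _

theorem einv_natCast (n : ℕ) : einv n = (n : ℝ)⁻¹ := by
  simp [einv]

theorem einv_top : einv ⊤ = 0 := by
  simp [einv]

theorem summable_one_div_two_pow_pnat : Summable fun i : ℕ+ ↦ (1 / 2 ^ (i : ℕ) : ℝ) := by
  simpa [Function.comp_def] using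
    summable_geometric_two.comp_injective PNat.coe_injective

def rotationAngle (u : ℕ+ → ℕ∞) : ℝ :=
  ∑' i : ℕ+, (1 / 2 ^ (i : ℕ)) * einv (u i)

theorem summable_rotationAngle (u : ℕ+ → ℕ∞) :
    Summable fun i : ℕ+ ↦ (1 / 2 ^ (i : ℕ) : ℝ) * einv (u i) :=
  summable_one_div_two_pow_pnat.of_nonneg_of_le
    (fun i ↦ mul_nonneg (by positivity) (einv_nonneg _))
    (fun i ↦ mul_le_of_le_one_right (by positivity) (einv_le_one _))

theorem F_iterate (z : Pt) (n : ℕ) :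
    F^[n] z = (z.1 + ((∑ k ∈ range n, rotationAngle (fun i ↦ z.2 i + k) : ℝ) : Circle1),
      fun i ↦ z.2 i + n) := by
  induction n with
  | zero => simp
  | succ n ih =>
    rw [Function.iterate_succ_apply', ih, F, sum_range_succ, AddCircle.coe_add, ← add_assoc]
    simp only [rotationAngle, Nat.cast_succ, add_assoc]

def tailWeight (M : ℕ+) : ℝ :=
  ∑' i : ℕ+, if M ≤ i then (1 / 2 ^ (i : ℕ) : ℝ) else 0

theorem tailWeight_pos (M : ℕ+) : 0 < tailWeight M :=
  (summable_one_div_two_pow_pnat.of_nonneg_of_le (fun i ↦ by split_ifs <;> positivity)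
    (fun i ↦ by split_ifs <;> simp)).tsum_pos (fun i ↦ by split_ifs <;> positivity) M
    (by simp)

variable {u v : ℕ+ → ℕ∞} {M : ℕ+} {K : ℕ}

theorem einv_add_sub_einv_add (hlt : ∀ i < M, v i = u i) (htop : ∀ i, M ≤ i → u i = ⊤)
    (hK : ∀ i, M ≤ i → v i = K) (i : ℕ+) (n : ℕ) :
    einv (v i + n) - einv (u i + n) = if M ≤ i then ((K + n : ℕ) : ℝ)⁻¹ else 0 := by
  split_ifs with hi
  · rw [htop i hi, hK i hi, top_add, einv_top, sub_zero, ← Nat.cast_add, einv_natCast]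
  · rw [hlt i (not_le.1 hi), sub_self]

theorem rotationAngle_sub_rotationAngle (hlt : ∀ i < M, v i = u i)
    (htop : ∀ i, M ≤ i → u i = ⊤) (hK : ∀ i, M ≤ i → v i = K) (n : ℕ) :
    rotationAngle (fun i ↦ v i + n) - rotationAngle (fun i ↦ u i + n)
      = tailWeight M * ((K + n : ℕ) : ℝ)⁻¹ := by
  rw [rotationAngle, rotationAngle, ← (summable_rotationAngle _).tsum_sub
    (summable_rotationAngle _), tailWeight, ← tsum_mul_right]
  refine tsum_congr fun i ↦ ?_
  rw [← mul_sub, einv_add_sub_einv_add hlt htop hK]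
  split_ifs <;> simp

theorem tsum_dE_add_div (hlt : ∀ i < M, v i = u i) (htop : ∀ i, M ≤ i → u i = ⊤)
    (hK : ∀ i, M ≤ i → v i = K) (n : ℕ) :
    ∑' i : ℕ+, dE (u i + n) (v i + n) / 2 ^ (i : ℕ) = tailWeight M * ((K + n : ℕ) : ℝ)⁻¹ := by
  rw [tailWeight, ← tsum_mul_right]
  refine tsum_congr fun i ↦ ?_
  rw [dE, abs_sub_comm, einv_add_sub_einv_add hlt htop hK]
  split_ifs <;> simp [abs_of_nonneg, div_eq_inv_mul, mul_comm, add_nonneg]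

theorem D_iterate (x y : Pt) (hy0 : y.1 = x.1) (hlt : ∀ i < M, y.2 i = x.2 i)
    (htop : ∀ i, M ≤ i → x.2 i = ⊤) (hK : ∀ i, M ≤ i → y.2 i = K) (n : ℕ) :
    D (F^[n] x) (F^[n] y) = ‖((∑ k ∈ range n, tailWeight M * ((K + k : ℕ) : ℝ)⁻¹ : ℝ) :
      Circle1)‖ + tailWeight M * ((K + n : ℕ) : ℝ)⁻¹ := by
  rw [D, F_iterate, F_iterate, hy0, tsum_dE_add_div hlt htop hK, dist_add_left, dist_comm,
    dist_eq_norm, ← AddCircle.coe_sub, ← sum_sub_distrib]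
  simp only [rotationAngle_sub_rotationAngle hlt htop hK]

end Dynamics

theorem claim1_scrambled_with_modulus_half_general
    (x : Pt) (M : ℕ+)
    (hinf : ∀ i : ℕ+, M ≤ i → x.2 i = ⊤)
    (K : ℕ)
    (y : Pt) (hy0 : y.1 = x.1)
    (hyi : ∀ i : ℕ+, i < M → y.2 i = x.2 i)
    (hyK : ∀ i : ℕ+, M ≤ i → y.2 i = (K : ℕ∞)) :
    liminf (fun n : ℕ => D (F^[n] x) (F^[n] y)) atTop = 0 ∧
    1 / 2 ≤ limsup (fun n : ℕ => D (F^[n] x) (F^[n] y)) atTop := by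
  set b : ℕ → ℝ := fun k ↦ tailWeight M * ((K + k : ℕ) : ℝ)⁻¹
  have hb0 : ∀ k, 0 ≤ b k := fun k ↦ mul_nonneg (tailWeight_pos M).le (by positivity)
  have hb : Tendsto b atTop (𝓝 0) := by
    simpa [b, add_comm K] using ((tendsto_inv_atTop_zero.comp
      (tendsto_natCast_atTop_atTop.comp (tendsto_add_atTop_nat K))).const_mul (tailWeight M))
  have hbs : ¬Summable b := fun h ↦ Real.not_summable_natCast_inv <| (summable_nat_add_iff K).1 <|
    by simpa [b, add_comm K] using (summable_mul_left_iff (tailWeight_pos M).ne').1 h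
  simp only [D_iterate x y hy0 hyi hinf hyK]
  exact ⟨AddCircle.liminf_norm_sum_range_add_eq_zero one_pos hb0 hb hbs,
    AddCircle.half_period_le_limsup_norm_sum_range_add one_pos hb0 hb hbs⟩

/-- Claim 1: let `x ∈ Y` have `x_i` finite for `1 ≤ i < M` and `x_i = ∞` for `i ≥ M`,
let `K ∈ ℕ` satisfy `K ≥ x_{M−1}` (i.e. `x_i ≤ K` for all `1 ≤ i < M`), and let `y ∈ Y` be
given by `y_i = x_i` for `0 ≤ i < M` and `y_i = K` for `i ≥ M`. Then `(x, y)` is a scrambled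
pair with modulus `1/2` for `F`: `liminf_{n→∞} D(Fⁿ(x), Fⁿ(y)) = 0` and
`limsup_{n→∞} D(Fⁿ(x), Fⁿ(y)) ≥ 1/2`. -/
theorem claim1_scrambled_with_modulus_half
    (x : Pt) (hx : x ∈ Y) (M : ℕ+)
    (hfin : ∀ i : ℕ+, i < M → x.2 i ≠ ⊤) (hinf : ∀ i : ℕ+, M ≤ i → x.2 i = ⊤)
    (K : ℕ) (hK1 : 1 ≤ K) (hK : ∀ i : ℕ+, i < M → x.2 i ≤ (K : ℕ∞))
    (y : Pt) (hy : y ∈ Y) (hy0 : y.1 = x.1)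
    (hyi : ∀ i : ℕ+, i < M → y.2 i = x.2 i)
    (hyK : ∀ i : ℕ+, M ≤ i → y.2 i = (K : ℕ∞)) :
    liminf (fun n : ℕ => D (F^[n] x) (F^[n] y)) atTop = 0 ∧
    1 / 2 ≤ limsup (fun n : ℕ => D (F^[n] x) (F^[n] y)) atTop :=
  claim1_scrambled_with_modulus_half_general x M hinf K y hy0 hyi hyK
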